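/- arXiv:1412.8042 — 2 statements merged into one kernel-verified Lean document; each statement's English description precedes it below -/
import Mathlib

section
/- Let G be a finite abelian group and F_q a field with char(F_q) ∤ |G|. For each primitive idempotent e ∈ F_q G with e ≠ Ĝ, there exists a unique co-cyclic subgroup H of G such that e·e_H = e; moreover e·e_K = 0 for every other co-cyclic subgroup K ≠ H. -/
open scoped Classical

/-- `hat F H` is the element `Ĥ = (1/|H|) ∑_{h ∈ H} h` of the group algebra `F G`. -/
noncomputable def hat (F : Type) [Field F] {G : Type} [Group G] [Fintype G]
    (H : Subgroup G) : MonoidAlgebra F G :=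
  (Nat.card H : F)⁻¹ • ∑ h ∈ (H : Set G).toFinset, MonoidAlgebra.single h (1 : F)

/-- The `p`-primary (Sylow) component of a commutative group `G`:
the subgroup of elements of `p`-power order. -/
def pComp (G : Type) [CommGroup G] (p : ℕ) : Subgroup G where
  carrier := {x | ∃ n : ℕ, x ^ p ^ n = 1}
  one_mem' := ⟨0, one_pow _⟩
  mul_mem' := by
    rintro a b ⟨m, hm⟩ ⟨k, hk⟩
    refine ⟨m + k, ?_⟩
    have ha : a ^ p ^ (m + k) = 1 := by rw [pow_add, pow_mul, hm, one_pow]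
    have hb : b ^ p ^ (m + k) = 1 := by rw [add_comm, pow_add, pow_mul, hk, one_pow]
    rw [mul_pow, ha, hb, one_mul]
  inv_mem' := by rintro a ⟨m, hm⟩; exact ⟨m, by rw [inv_pow, hm, inv_one]⟩

/-- `H` is a co-cyclic subgroup of `G`: the quotient `G/H` is a nontrivial cyclic group. -/
def Cocyclic {G : Type} [CommGroup G] (H : Subgroup G) : Prop :=
  IsCyclic (G ⧸ H) ∧ Nontrivial (G ⧸ H)

/-- `K` is a co-cyclic subgroup of the subgroup `A`. -/
def CocyclicIn {G : Type} [CommGroup G] (K A : Subgroup G) : Prop :=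
  K ≤ A ∧ IsCyclic (↥A ⧸ K.subgroupOf A) ∧ Nontrivial (↥A ⧸ K.subgroupOf A)

/-- `sharp` assigns to each co-cyclic subgroup `K` of a Sylow subgroup `G_p` the unique
subgroup `K♯` with `K ≤ K♯ ≤ G_p` and `[K♯ : K] = p`. -/
def IsSharp {G : Type} [CommGroup G] [Fintype G] (sharp : Subgroup G → Subgroup G) : Prop :=
  ∀ p ∈ (Fintype.card G).primeFactors, ∀ K : Subgroup G, CocyclicIn K (pComp G p) →
    (K ≤ sharp K ∧ sharp K ≤ pComp G p ∧ K.relIndex (sharp K) = p) ∧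
    ∀ L : Subgroup G, K ≤ L → L ≤ pComp G p → K.relIndex L = p → L = sharp K

/-- The idempotent `e_H` associated to a co-cyclic subgroup `H` of a finite abelian
group `G`: the product over the primes `p` dividing `|G|` of `Ĝ_p` (if `H_p = G_p`) or
`Ĥ_p − Ĥ_p♯` (otherwise), where `H_p = H ∩ G_p` is the `p`-Sylow component of `H`. -/
noncomputable def eH (F : Type) [Field F] {G : Type} [CommGroup G] [Fintype G]
    (sharp : Subgroup G → Subgroup G) (H : Subgroup G) : MonoidAlgebra F G :=
  ∏ p ∈ (Fintype.card G).primeFactors,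
    if pComp G p ⊓ H = pComp G p then hat F (pComp G p)
    else hat F (pComp G p ⊓ H) - hat F (sharp (pComp G p ⊓ H))

/-- `e` is a primitive idempotent: a nonzero idempotent which is not the sum of two
nonzero orthogonal idempotents. -/
def IsPrimIdem {R : Type} [Ring R] (e : R) : Prop :=
  e ≠ 0 ∧ e * e = e ∧
    ∀ a b : R, a * a = a → b * b = b → a * b = 0 → b * a = 0 → e = a + b →
      a = 0 ∨ b = 0


/-!
Evaluating `F[G]` at all characters `φ : G →* F̄ˣ` is injective because `char F ∤ |G|`
(Fourier inversion). Under this evaluation `Ĥ` becomes the indicator of `H ≤ ker φ`, and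
comparing Sylow components shows that `e_H` becomes the indicator of `ker φ = H`; hence the
`e_H` are pairwise orthogonal idempotents. A primitive idempotent `e` does not vanish at some
`φ`. If `φ = 1` this forces `e = Ĝ`; otherwise `ker φ` is co-cyclic and primitivity of `e`
gives `e · e_{ker φ} = e`.
-/

theorem IsPrimIdem.mul_eq_zero_or_eq {R : Type} [CommRing R] {e x : R} (he : IsPrimIdem e)
    (hx : IsIdempotentElem x) : e * x = 0 ∨ e * x = e := by
  have hee : e * e = e := he.2.1
  have hxx : x * x = x := hx
  refine (he.2.2 (e * x) (e - e * x) ?_ ?_ ?_ ?_ (by ring)).imp_right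
    fun h => (sub_eq_zero.mp h).symm
  · linear_combination x * x * hee + e * hxx
  · linear_combination (1 - 2 * x + x * x) * hee + e * hxx
  · linear_combination (x - x * x) * hee - e * hxx
  · linear_combination (x - x * x) * hee - e * hxx

section PrimaryComponents

variable {G : Type} [CommGroup G]

theorem le_of_forall_pComp_inf_le [Fintype G] {H K : Subgroup G}
    (h : ∀ p ∈ (Fintype.card G).primeFactors, pComp G p ⊓ H ≤ K) : H ≤ K := by
  suffices key : ∀ n, n ∣ Fintype.card G → ∀ x ∈ H, x ^ n = 1 → x ∈ K from
    fun x hx => key _ dvd_rfl x hx pow_card_eq_one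
  intro n
  induction n using Nat.recOnPrimeCoprime with
  | zero => exact fun h0 => absurd (Nat.eq_zero_of_zero_dvd h0) Fintype.card_ne_zero
  | prime_pow p k hp =>
    intro hdvd x hx hxp
    rcases k.eq_zero_or_pos with rfl | hk
    · rw [pow_zero, pow_one] at hxp
      exact hxp ▸ one_mem K
    · have hpG : p ∈ (Fintype.card G).primeFactors :=
        Nat.mem_primeFactors.mpr ⟨hp, (dvd_pow_self p hk.ne').trans hdvd, Fintype.card_ne_zero⟩
      exact h p hpG ⟨⟨k, hxp⟩, hx⟩
  | coprime a b _ _ hab iha ihb =>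
    intro hdvd x hx hxab
    have hxa : x ^ a ∈ K :=
      ihb (dvd_of_mul_left_dvd hdvd) _ (pow_mem hx a) (by rw [← pow_mul, hxab])
    have hxb : x ^ b ∈ K :=
      iha (dvd_of_mul_right_dvd hdvd) _ (pow_mem hx b) (by rw [← pow_mul, mul_comm, hxab])
    have bezout : x = (x ^ a) ^ Nat.gcdA a b * (x ^ b) ^ Nat.gcdB a b := by
      rw [← zpow_natCast, ← zpow_natCast, ← zpow_mul, ← zpow_mul, ← zpow_add,
        ← Nat.gcd_eq_gcd_ab, hab, Nat.cast_one, zpow_one]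
    rw [bezout]
    exact mul_mem (zpow_mem hxa _) (zpow_mem hxb _)

theorem eq_of_forall_pComp_inf_eq [Fintype G] {H K : Subgroup G}
    (h : ∀ p ∈ (Fintype.card G).primeFactors, pComp G p ⊓ H = pComp G p ⊓ K) : H = K :=
  le_antisymm (le_of_forall_pComp_inf_le fun p hp => (h p hp).le.trans inf_le_right)
    (le_of_forall_pComp_inf_le fun p hp => (h p hp).ge.trans inf_le_right)

theorem exists_relIndex_eq_prime_of_lt {p : ℕ} (hp : p.Prime) {K L : Subgroup G} (hKL : K < L)
    (hL : L ≤ pComp G p) : ∃ M, K ≤ M ∧ M ≤ L ∧ K.relIndex M = p := by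
  obtain ⟨x, hxL, hxK⟩ := SetLike.exists_of_lt hKL
  obtain ⟨n, hxn⟩ := hL hxL
  set y : G ⧸ K := QuotientGroup.mk x
  have hy : orderOf y ∣ p ^ n :=
    orderOf_dvd_of_pow_eq_one (by rw [← QuotientGroup.mk_pow, hxn, QuotientGroup.mk_one])
  have hy1 : orderOf y ≠ 1 := by rwa [Ne, orderOf_eq_one_iff, QuotientGroup.eq_one_iff]
  have hpy : p ∣ orderOf y := by
    obtain ⟨i, -, hi⟩ := (Nat.dvd_prime_pow hp).1 hy
    rw [hi] at hy1 ⊢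
    exact dvd_pow_self p (by rintro rfl; exact hy1 (pow_zero p))
  -- the image of `z` in `G ⧸ K` has order exactly `p`
  set z := x ^ (orderOf y / p)
  refine ⟨K ⊔ Subgroup.zpowers z, le_sup_left,
    sup_le hKL.le (Subgroup.zpowers_le.mpr (pow_mem hxL _)), ?_⟩
  have hker := (Subgroup.zpowers z).relIndex_ker (QuotientGroup.mk' K)
  rw [QuotientGroup.ker_mk'] at hker
  rw [Subgroup.relIndex_sup_left, hker, MonoidHom.map_zpowers, Nat.card_zpowers,
    QuotientGroup.mk'_apply, QuotientGroup.mk_pow, orderOf_pow_orderOf_div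
    (ne_zero_of_dvd_ne_zero (pow_ne_zero n hp.ne_zero) hy) hpy]

theorem Cocyclic.cocyclicIn_inf {H : Subgroup G} (hH : Cocyclic H) {P : Subgroup G}
    (hP : P ⊓ H ≠ P) : CocyclicIn (P ⊓ H) P := by
  have := hH.1
  have hker : ((QuotientGroup.mk' H).comp P.subtype).ker = (P ⊓ H).subgroupOf P := by
    rw [← MonoidHom.comap_ker, QuotientGroup.ker_mk', Subgroup.inf_subgroupOf_left,
      Subgroup.subgroupOf]
  refine ⟨inf_le_left, (QuotientGroup.quotientMulEquivOfEq hker |>.symm.trans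
    (QuotientGroup.quotientKerEquivRange _)).isCyclic.mpr inferInstance, ?_⟩
  rw [QuotientGroup.nontrivial_iff, Ne, Subgroup.subgroupOf_eq_top]
  exact fun h => hP (inf_eq_left.mpr (h.trans inf_le_right))

end PrimaryComponents

section Sharp

variable {G : Type} [CommGroup G] [Fintype G] {sharp : Subgroup G → Subgroup G} {p : ℕ}
  {K : Subgroup G}

theorem IsSharp.lt (hsharp : IsSharp sharp) (hp : p ∈ (Fintype.card G).primeFactors)
    (hK : CocyclicIn K (pComp G p)) : K < sharp K := by
  obtain ⟨⟨hle, -, hindex⟩, -⟩ := hsharp p hp K hK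
  refine lt_of_le_of_ne hle fun h => ?_
  rw [← h, Subgroup.relIndex_self] at hindex
  exact (Nat.prime_of_mem_primeFactors hp).one_lt.ne hindex

theorem IsSharp.le_of_lt (hsharp : IsSharp sharp) (hp : p ∈ (Fintype.card G).primeFactors)
    (hK : CocyclicIn K (pComp G p)) {L : Subgroup G} (hKL : K < L) (hL : L ≤ pComp G p) :
    sharp K ≤ L := by
  obtain ⟨M, hKM, hML, hM⟩ :=
    exists_relIndex_eq_prime_of_lt (Nat.prime_of_mem_primeFactors hp) hKL hL
  exact (hsharp p hp K hK).2 M hKM (hML.trans hL) hM ▸ hML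

end Sharp

section Characters

variable {F G : Type} {K : Type*} [Field F] [CommGroup G] [Field K] [Algebra F K]

noncomputable def charEval (φ : G →* Kˣ) : MonoidAlgebra F G →ₐ[F] K :=
  MonoidAlgebra.lift F K G ((Units.coeHom K).comp φ)

@[simp]
theorem charEval_single (φ : G →* Kˣ) (g : G) (c : F) :
    charEval φ (MonoidAlgebra.single g c) = c • (φ g : K) := by
  simp [charEval]

theorem charEval_hat [Fintype G] (φ : G →* Kˣ) (H : Subgroup G) (hH : (Nat.card H : F) ≠ 0) :
    charEval φ (hat F H) = if H ≤ φ.ker then 1 else 0 := by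
  have hsum := sum_hom_units ((Units.coeHom K).comp (φ.comp H.subtype))
  rw [hat, map_smul, map_sum]
  simp only [charEval_single, one_smul]
  have hcond : (Units.coeHom K).comp (φ.comp H.subtype) = 1 ↔ H ≤ φ.ker := by
    simp [DFunLike.ext_iff, SetLike.le_def, MonoidHom.mem_ker]
  simp only [hcond, ← Nat.card_eq_fintype_card] at hsum
  rw [← Finset.sum_set_coe, show ∑ h : (H : Set G), (φ h : K) = _ from hsum]
  split_ifs
  · rw [Algebra.smul_def, map_inv₀, map_natCast]
    exact inv_mul_cancel₀ (by simpa using (map_ne_zero (algebraMap F K)).mpr hH)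
  · simp

theorem sum_monoidHom_apply [Finite G] [HasEnoughRootsOfUnity K (Monoid.exponent G)]
    [Fintype (G →* Kˣ)] (g : G) :
    ∑ φ : G →* Kˣ, (φ g : K) = if g = 1 then (Nat.card G : K) else 0 := by
  have h := sum_hom_units ((Units.coeHom K).comp (MonoidHom.eval g))
  have hcond : (Units.coeHom K).comp (MonoidHom.eval g) = 1 ↔ g = 1 := by
    simpa [DFunLike.ext_iff] using CommGroup.forall_apply_eq_apply_iff G (M := K) (g' := 1)
  simp only [hcond, Fintype.card_eq_nat_card,
    CommGroup.card_monoidHom_of_hasEnoughRootsOfUnity] at h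
  exact h.trans (by split_ifs <;> simp)

theorem sum_charEval [Fintype G] [HasEnoughRootsOfUnity K (Monoid.exponent G)]
    [Fintype (G →* Kˣ)] (x : MonoidAlgebra F G) :
    ∑ φ : G →* Kˣ, charEval φ x = x.coeff 1 • (Nat.card G : K) := by
  induction x using MonoidAlgebra.induction_linear with
  | zero => simp
  | add x y hx hy =>
    simp only [map_add, Finset.sum_add_distrib, hx, hy, MonoidAlgebra.coeff_add,
      Finsupp.add_apply, add_smul]
  | single g c =>
    simp only [charEval_single, ← Finset.smul_sum, sum_monoidHom_apply,
      MonoidAlgebra.coeff_single, Finsupp.single_apply]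
    split_ifs <;> simp

theorem eq_zero_of_forall_charEval_eq_zero [Fintype G]
    [HasEnoughRootsOfUnity K (Monoid.exponent G)] (hG : (Nat.card G : K) ≠ 0)
    {x : MonoidAlgebra F G} (hx : ∀ φ : G →* Kˣ, charEval φ x = 0) : x = 0 := by
  have := Fintype.ofFinite (G →* Kˣ)
  ext g
  have h := sum_charEval (K := K) (MonoidAlgebra.single g⁻¹ 1 * x)
  simp only [map_mul, hx, mul_zero, Finset.sum_const_zero,
    MonoidAlgebra.coeff_single_mul_apply] at h
  simpa [← Nat.card_eq_fintype_card, hG] using h.symm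

end Characters

theorem cocyclic_ker {G : Type} {R : Type*} [CommGroup G] [Finite G] [CommRing R] [IsDomain R]
    {φ : G →* Rˣ} (hφ : φ ≠ 1) : Cocyclic φ.ker :=
  ⟨isCyclic_of_injective_ringHom ((Units.coeHom R).comp (QuotientGroup.kerLift φ))
      (Units.val_injective.comp (QuotientGroup.kerLift_injective φ)),
    QuotientGroup.nontrivial_iff.mpr (mt MonoidHom.ker_eq_top_iff.mp hφ)⟩

section CocyclicIdempotents

variable {F G : Type} {K : Type*} [Field F] [CommGroup G] [Fintype G] [Field K] [Algebra F K]
  {sharp : Subgroup G → Subgroup G} {H : Subgroup G}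

theorem natCast_card_subgroup_ne_zero (hG : (Fintype.card G : F) ≠ 0) (H : Subgroup G) :
    (Nat.card H : F) ≠ 0 := fun h => hG <| by
  rw [← Nat.card_eq_fintype_card]
  exact zero_dvd_iff.mp (h ▸ Nat.cast_dvd_cast (Subgroup.card_subgroup_dvd_card H))

theorem eq_of_forall_charEval_eq (hG : (Fintype.card G : F) ≠ 0) {x y : MonoidAlgebra F G}
    (h : ∀ φ : G →* (AlgebraicClosure F)ˣ, charEval φ x = charEval φ y) : x = y := by
  have hGK : (Nat.card G : AlgebraicClosure F) ≠ 0 := by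
    simpa using (map_ne_zero (algebraMap F (AlgebraicClosure F))).mpr hG
  have : NeZero (Monoid.exponent G : AlgebraicClosure F) :=
    ⟨fun h => hGK (zero_dvd_iff.mp (h ▸ Nat.cast_dvd_cast Group.exponent_dvd_nat_card))⟩
  exact sub_eq_zero.mp
    (eq_zero_of_forall_charEval_eq_zero hGK fun φ => by rw [map_sub, h φ, sub_self])

theorem charEval_eH_factor (hG : (Fintype.card G : F) ≠ 0) (hsharp : IsSharp sharp)
    (hH : Cocyclic H) {p : ℕ} (hp : p ∈ (Fintype.card G).primeFactors) (φ : G →* Kˣ) :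
    charEval φ (if pComp G p ⊓ H = pComp G p then hat F (pComp G p)
      else hat F (pComp G p ⊓ H) - hat F (sharp (pComp G p ⊓ H))) =
      if pComp G p ⊓ H = pComp G p ⊓ φ.ker then 1 else 0 := by
  have hcard := natCast_card_subgroup_ne_zero hG
  split_ifs with hHP hker hker
  · rw [charEval_hat φ _ (hcard _), if_pos ((hHP.symm.trans hker).le.trans inf_le_right)]
  · rw [charEval_hat φ _ (hcard _),
      if_neg fun hle => hker (hHP.trans (inf_eq_left.mpr hle).symm)]
  · have hK := hH.cocyclicIn_inf hHP
    rw [map_sub, charEval_hat φ _ (hcard _), charEval_hat φ _ (hcard _),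
      if_pos (hker.le.trans inf_le_right), if_neg, sub_zero]
    exact fun hle => (hsharp.lt hp hK).not_ge
      ((le_inf ((hsharp p hp _ hK).1.2.1) hle).trans hker.ge)
  · have hK := hH.cocyclicIn_inf hHP
    rw [map_sub, charEval_hat φ _ (hcard _), charEval_hat φ _ (hcard _), sub_eq_zero]
    by_cases hle : pComp G p ⊓ H ≤ φ.ker
    · have hlt : pComp G p ⊓ H < pComp G p ⊓ φ.ker :=
        lt_of_le_of_ne (le_inf inf_le_left hle) hker
      rw [if_pos hle, if_pos ((hsharp.le_of_lt hp hK hlt inf_le_left).trans inf_le_right)]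
    · rw [if_neg hle, if_neg fun h => hle ((hsharp.lt hp hK).le.trans h)]

theorem charEval_eH (hG : (Fintype.card G : F) ≠ 0) (hsharp : IsSharp sharp)
    (hH : Cocyclic H) (φ : G →* Kˣ) :
    charEval φ (eH F sharp H) = if φ.ker = H then 1 else 0 := by
  rw [eH, map_prod, Finset.prod_congr rfl fun p hp => charEval_eH_factor hG hsharp hH hp φ,
    Finset.prod_boole]
  by_cases hker : φ.ker = H
  · rw [if_pos hker, if_pos fun p _ => hker ▸ rfl]
  · rw [if_neg hker, if_neg fun h => hker (eq_of_forall_pComp_inf_eq h).symm]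

theorem hat_isIdempotentElem (hG : (Fintype.card G : F) ≠ 0) (H : Subgroup G) :
    IsIdempotentElem (hat F H) :=
  eq_of_forall_charEval_eq hG fun φ => by
    rw [map_mul, charEval_hat φ H (natCast_card_subgroup_ne_zero hG H)]
    split_ifs <;> simp

theorem eH_isIdempotentElem (hG : (Fintype.card G : F) ≠ 0) (hsharp : IsSharp sharp)
    (hH : Cocyclic H) : IsIdempotentElem (eH F sharp H) :=
  eq_of_forall_charEval_eq hG fun φ => by
    rw [map_mul, charEval_eH hG hsharp hH]
    split_ifs <;> simp

theorem eH_mul_eH_of_ne (hG : (Fintype.card G : F) ≠ 0) (hsharp : IsSharp sharp)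
    {L : Subgroup G} (hH : Cocyclic H) (hL : Cocyclic L) (hHL : H ≠ L) :
    eH F sharp H * eH F sharp L = 0 :=
  eq_of_forall_charEval_eq hG fun φ => by
    rw [map_mul, charEval_eH hG hsharp hH, charEval_eH hG hsharp hL, map_zero]
    split_ifs with h1 h2
    · exact absurd (h1.symm.trans h2) hHL
    all_goals simp

theorem IsPrimIdem.exists_cocyclic_mul_eH_eq (hG : (Fintype.card G : F) ≠ 0)
    (hsharp : IsSharp sharp) {e : MonoidAlgebra F G} (he : IsPrimIdem e)
    (hne : e ≠ hat F (⊤ : Subgroup G)) : ∃ H, Cocyclic H ∧ e * eH F sharp H = e := by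
  obtain ⟨φ, hφ⟩ : ∃ φ : G →* (AlgebraicClosure F)ˣ, charEval φ e ≠ 0 := by
    by_contra! h
    exact he.1 (eq_of_forall_charEval_eq hG fun φ => by rw [h φ, map_zero])
  have absorb : ∀ x, IsIdempotentElem x → charEval φ x = 1 → e * x = e := fun x hx hφx =>
    (he.mul_eq_zero_or_eq hx).resolve_left fun h =>
      hφ (by simpa [hφx] using congr_arg (charEval φ) h)
  by_cases hφ1 : φ = 1
  · have hcard := natCast_card_subgroup_ne_zero hG (⊤ : Subgroup G)
    have htop : ∀ ψ : G →* (AlgebraicClosure F)ˣ, ⊤ ≤ ψ.ker ↔ ψ = φ := fun ψ => by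
      rw [top_le_iff, MonoidHom.ker_eq_top_iff, hφ1]
    have heG : e * hat F ⊤ = e := absorb _ (hat_isIdempotentElem hG ⊤) (by
      rw [charEval_hat φ ⊤ hcard, if_pos ((htop φ).mpr rfl)])
    have h1 : charEval φ e = 1 :=
      (IsIdempotentElem.iff_eq_zero_or_one.mp
        ((show IsIdempotentElem e from he.2.1).map (charEval φ))).resolve_left hφ
    refine absurd (eq_of_forall_charEval_eq hG fun ψ => ?_) hne
    rw [← heG, map_mul, charEval_hat ψ ⊤ hcard, htop]
    split_ifs with hψ
    · rw [hψ, h1, mul_one]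
    · rw [mul_zero]
  · have hker := cocyclic_ker hφ1
    exact ⟨φ.ker, hker, absorb _ (eH_isIdempotentElem hG hsharp hker)
      (by rw [charEval_eH hG hsharp hker, if_pos rfl])⟩

end CocyclicIdempotents

theorem stmt9 (F : Type) [Field F] (G : Type) [CommGroup G] [Fintype G]
    (hchar : ¬ (ringChar F ∣ Fintype.card G))
    (sharp : Subgroup G → Subgroup G) (hsharp : IsSharp sharp)
    (e : MonoidAlgebra F G) (he : IsPrimIdem e) (hne : e ≠ hat F (⊤ : Subgroup G)) :
    (∃! H : Subgroup G, Cocyclic H ∧ e * eH F sharp H = e) ∧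
    (∀ H K : Subgroup G, Cocyclic H → e * eH F sharp H = e →
      Cocyclic K → K ≠ H → e * eH F sharp K = 0) := by
  have hG : (Fintype.card G : F) ≠ 0 := (CharP.cast_eq_zero_iff F (ringChar F) _).not.mpr hchar
  have horth : ∀ H K : Subgroup G, Cocyclic H → e * eH F sharp H = e →
      Cocyclic K → K ≠ H → e * eH F sharp K = 0 := fun H K hH hHe hK hKH => by
    rw [← hHe, mul_assoc, eH_mul_eH_of_ne hG hsharp hH hK hKH.symm, mul_zero]
  obtain ⟨H, hH, hHe⟩ := he.exists_cocyclic_mul_eH_eq hG hsharp hne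
  refine ⟨⟨H, ⟨hH, hHe⟩, fun K ⟨hK, hKe⟩ => by_contra fun hKH => he.1 ?_⟩, horth⟩
  rw [← hKe, horth H K hH hHe hK hKH]
end

section
/- Let p be a prime, n ≥ 1, G cyclic of order pⁿ generated by g, and F_q a finite field with the class of q generating U(Z_{pⁿ}). For 1 ≤ i ≤ n, the minimal ideal I_i = (F_qG)e_i generated by e_i = Ĝ_i − Ĝ_{i−1} (with G_i = ⟨g^{p^i}⟩) has F_q-dimension φ(p^i) = p^i − p^{i−1}. -/
/-!
`Ĝ_i` and `Ĝ_{i-1}` are idempotents with `Ĝ_i Ĝ_{i-1} = Ĝ_{i-1}`, so the ideal `F G Ĝ_i` is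
the direct sum of `F G Ĝ_{i-1}` and `F G e_i`. For any subgroup `H` of order invertible in `F`,
the translates `x Ĥ` over coset representatives `x` form a basis of `F G Ĥ`: they span it
because `Ĥ` absorbs `H`, and they are independent because the projection `F G → F[G/H]` sends
them to the standard basis. Hence `dim F G Ĥ = [G : H]`, and `[G : ⟨g^{p^i}⟩] = p^i`.
-/

open scoped Classical

open MonoidAlgebra

theorem FiniteField.natCast_ne_zero_of_coprime_card {K : Type*} [Field K] [Fintype K] {m : ℕ}
    (hm : Nat.Coprime (Fintype.card K) m) : (m : K) ≠ 0 := by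
  intro h
  have hq := FiniteField.cast_card_eq_zero K
  rw [ringChar.spec] at h hq
  exact CharP.ringChar_ne_one (Nat.eq_one_of_dvd_coprimes hm hq h)

theorem Subgroup.index_zpowers_pow_of_dvd {G : Type*} [Group G] [Finite G] {g : G}
    (hgen : ∀ x : G, x ∈ Subgroup.zpowers g) {d : ℕ} (hd : d ∣ Nat.card G) :
    (Subgroup.zpowers (g ^ d)).index = d := by
  have hG : 0 < Nat.card G := Nat.card_pos
  have hd0 : d ≠ 0 := by rintro rfl; exact hG.ne' (zero_dvd_iff.mp hd)
  have hord : orderOf g = Nat.card G := orderOf_eq_card_of_forall_mem_zpowers hgen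
  have hcard : Nat.card (Subgroup.zpowers (g ^ d)) = Nat.card G / d := by
    rw [Nat.card_zpowers, orderOf_pow_of_dvd hd0 (hord ▸ hd), hord]
  have := (Subgroup.zpowers (g ^ d)).index_mul_card
  rw [hcard] at this
  exact Nat.eq_of_mul_eq_mul_right (Nat.div_pos (Nat.le_of_dvd hG hd) (Nat.pos_of_ne_zero hd0))
    (this.trans (Nat.mul_div_cancel' hd).symm)

section IdempotentIdeal

variable {F A : Type*} [Field F] [CommRing A] [Algebra F A]

theorem mem_range_mulRight_iff_of_isIdempotentElem {e x : A} (he : IsIdempotentElem e) :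
    x ∈ LinearMap.range (LinearMap.mulRight F e) ↔ x * e = x := by
  refine ⟨?_, fun hx => ⟨x, hx⟩⟩
  rintro ⟨y, rfl⟩
  simp only [LinearMap.mulRight_apply, mul_assoc, he.eq]

theorem finrank_range_mulRight_sub [FiniteDimensional F A] {u v : A} (hu : IsIdempotentElem u)
    (hv : IsIdempotentElem v) (huv : u * v = v) :
    Module.finrank F (LinearMap.range (LinearMap.mulRight F (u - v))) =
      Module.finrank F (LinearMap.range (LinearMap.mulRight F u)) -
        Module.finrank F (LinearMap.range (LinearMap.mulRight F v)) := by
  have hvu : v * u = v := by rw [mul_comm, huv]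
  have hw := hv.sub hu hvu huv
  have hwu : (u - v) * u = u - v := by rw [sub_mul, hu.eq, hvu]
  have hwv : (u - v) * v = 0 := by rw [sub_mul, huv, hv.eq, sub_self]
  set Ru := LinearMap.range (LinearMap.mulRight F u)
  set Rv := LinearMap.range (LinearMap.mulRight F v)
  set Rw := LinearMap.range (LinearMap.mulRight F (u - v))
  have hsup : Rv ⊔ Rw = Ru := by
    refine le_antisymm (sup_le ?_ ?_) fun x hx => ?_
    · rintro _ ⟨x, rfl⟩
      exact ⟨x * v, by simp only [LinearMap.mulRight_apply, mul_assoc, hvu]⟩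
    · rintro _ ⟨x, rfl⟩
      exact ⟨x * (u - v), by simp only [LinearMap.mulRight_apply, mul_assoc, hwu]⟩
    · refine Submodule.mem_sup.mpr ⟨x * v, ⟨x, rfl⟩, x * (u - v), ⟨x, rfl⟩, ?_⟩
      rw [← mul_add, add_sub_cancel]
      exact (mem_range_mulRight_iff_of_isIdempotentElem hu).mp hx
  have hinf : Rv ⊓ Rw = ⊥ := by
    refine eq_bot_iff.mpr fun x ⟨hxv, hxw⟩ => ?_
    replace hxv := (mem_range_mulRight_iff_of_isIdempotentElem hv).mp hxv
    replace hxw := (mem_range_mulRight_iff_of_isIdempotentElem hw).mp hxw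
    rw [Submodule.mem_bot, ← hxw, ← hxv, mul_assoc, mul_comm v, hwv, mul_zero]
  have := Submodule.finrank_sup_add_finrank_inf_eq Rv Rw
  rw [hsup, hinf, finrank_bot] at this
  omega

end IdempotentIdeal

section Hat

variable {F G : Type} [Field F] [CommGroup G] [Fintype G]

theorem hat_mul_single_of_mem (H : Subgroup G) {h : G} (hh : h ∈ H) :
    hat F H * single h (1 : F) = hat F H := by
  rw [hat, smul_mul_assoc, Finset.sum_mul]
  congr 1
  refine Finset.sum_nbij' (· * h) (· * h⁻¹) ?_ ?_ ?_ ?_ ?_ <;>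
    simp_all [H.mul_mem_cancel_right hh, H.mul_mem_cancel_right (H.inv_mem hh),
      single_mul_single]

theorem hat_mul_hat_of_le {K H : Subgroup G} (hKH : K ≤ H) (hK : (Nat.card K : F) ≠ 0) :
    hat F K * hat F H = hat F H := by
  have hmul : ∀ k ∈ (K : Set G).toFinset, single k (1 : F) * hat F H = hat F H := fun k hk => by
    rw [mul_comm, hat_mul_single_of_mem H (hKH (Set.mem_toFinset.mp hk))]
  rw [hat, smul_mul_assoc, Finset.sum_mul, Finset.sum_congr rfl hmul, Finset.sum_const,
    Set.toFinset_card, ← Nat.card_eq_fintype_card, ← Nat.cast_smul_eq_nsmul F, smul_smul,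
    SetLike.coe_sort_coe, inv_mul_cancel₀ hK, one_smul]

theorem isIdempotentElem_hat {H : Subgroup G} (hH : (Nat.card H : F) ≠ 0) :
    IsIdempotentElem (hat F H) :=
  hat_mul_hat_of_le le_rfl hH

theorem single_mul_hat_eq_of_mk_eq {H : Subgroup G} {a b : G} (hab : (a : G ⧸ H) = b) :
    single a (1 : F) * hat F H = single b 1 * hat F H := by
  have hmem : a⁻¹ * b ∈ H := QuotientGroup.eq.mp hab
  calc single a (1 : F) * hat F H = single a 1 * (hat F H * single (a⁻¹ * b) 1) := by
        rw [hat_mul_single_of_mem H hmem]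
    _ = single b 1 * hat F H := by
        rw [mul_comm (hat F H), ← mul_assoc, single_mul_single, mul_inv_cancel_left, one_mul]

theorem mapDomainAlgHom_mk_hat {H : Subgroup G} (hH : (Nat.card H : F) ≠ 0) :
    mapDomainAlgHom F F (QuotientGroup.mk' H) (hat F H) = 1 := by
  have hone : ∀ h ∈ (H : Set G).toFinset,
      mapDomainAlgHom F F (QuotientGroup.mk' H) (single h (1 : F)) = single 1 1 := fun h hh => by
    rw [mapDomainAlgHom_apply, mapDomain_single, QuotientGroup.mk'_apply,
      (QuotientGroup.eq_one_iff h).mpr (Set.mem_toFinset.mp hh)]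
  rw [hat, map_smul, map_sum, Finset.sum_congr rfl hone, Finset.sum_const, Set.toFinset_card,
    ← Nat.card_eq_fintype_card, ← Nat.cast_smul_eq_nsmul F, smul_smul, SetLike.coe_sort_coe,
    inv_mul_cancel₀ hH, one_smul, one_def]

theorem range_mulRight_hat (H : Subgroup G) :
    LinearMap.range (LinearMap.mulRight F (hat F H)) =
      Submodule.span F (Set.range fun c : G ⧸ H => single c.out (1 : F) * hat F H) := by
  have hcomp : (fun c : G ⧸ H => single c.out (1 : F) * hat F H) ∘ QuotientGroup.mk =
      LinearMap.mulRight F (hat F H) ∘ basis G F := by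
    funext a
    exact single_mul_hat_eq_of_mk_eq (QuotientGroup.out_eq' (a : G ⧸ H))
  rw [← QuotientGroup.mk_surjective.range_comp, hcomp, Set.range_comp, ← Submodule.map_span,
    (basis G F).span_eq, Submodule.map_top]

theorem linearIndependent_single_out_mul_hat {H : Subgroup G} (hH : (Nat.card H : F) ≠ 0) :
    LinearIndependent F fun c : G ⧸ H => single c.out (1 : F) * hat F H := by
  have hbasis : (mapDomainAlgHom F F (QuotientGroup.mk' H)).toLinearMap ∘
      (fun c : G ⧸ H => single c.out (1 : F) * hat F H) = basis (G ⧸ H) F := by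
    funext c
    simp only [Function.comp_apply, AlgHom.toLinearMap_apply, map_mul, mapDomainAlgHom_mk_hat hH,
      mul_one, mapDomainAlgHom_apply, mapDomain_single, QuotientGroup.mk'_apply,
      QuotientGroup.out_eq', basis_apply]
  exact LinearIndependent.of_comp _ (hbasis ▸ (basis (G ⧸ H) F).linearIndependent)

theorem finrank_range_mulRight_hat {H : Subgroup G} (hH : (Nat.card H : F) ≠ 0) :
    Module.finrank F (LinearMap.range (LinearMap.mulRight F (hat F H))) = H.index := by
  rw [range_mulRight_hat, finrank_span_eq_card (linearIndependent_single_out_mul_hat hH),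
    Subgroup.index, Nat.card_eq_fintype_card]

end Hat

theorem stmt18_general (p n : ℕ)
    (F : Type) [Field F] [Fintype F]
    (G : Type) [CommGroup G] [Fintype G] (g : G)
    (hgen : ∀ x : G, x ∈ Subgroup.zpowers g) (hcard : Fintype.card G = p ^ n)
    (hcop : Nat.Coprime (Fintype.card F) p)
    (i : ℕ) (hin : i ≤ n) :
    Module.finrank F
      (LinearMap.range (LinearMap.mulRight F
        (hat F (Subgroup.zpowers (g ^ p ^ i)) - hat F (Subgroup.zpowers (g ^ p ^ (i - 1)))))) =
      p ^ i - p ^ (i - 1) := by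
  have hcardG : Nat.card G = p ^ n := by rw [Nat.card_eq_fintype_card, hcard]
  have hpF : (p : F) ≠ 0 := FiniteField.natCast_ne_zero_of_coprime_card hcop
  have hH : ∀ H : Subgroup G, (Nat.card H : F) ≠ 0 := fun H h0 => by
    obtain ⟨k, hk⟩ := H.card_subgroup_dvd_card
    exact pow_ne_zero n hpF (by rw [← Nat.cast_pow, ← hcardG, hk, Nat.cast_mul, h0, zero_mul])
  have hle : Subgroup.zpowers (g ^ p ^ i) ≤ Subgroup.zpowers (g ^ p ^ (i - 1)) := by
    obtain ⟨k, hk⟩ := pow_dvd_pow p (Nat.sub_le i 1)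
    rw [Subgroup.zpowers_le, hk, pow_mul]
    exact Subgroup.npow_mem_zpowers _ k
  rw [finrank_range_mulRight_sub (isIdempotentElem_hat (hH _)) (isIdempotentElem_hat (hH _))
      (hat_mul_hat_of_le hle (hH _)), finrank_range_mulRight_hat (hH _),
    finrank_range_mulRight_hat (hH _),
    Subgroup.index_zpowers_pow_of_dvd hgen (hcardG ▸ pow_dvd_pow p hin),
    Subgroup.index_zpowers_pow_of_dvd hgen (hcardG ▸ pow_dvd_pow p (by omega))]

theorem stmt18 (p n : ℕ) (hp : p.Prime) (hn : 1 ≤ n)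
    (F : Type) [Field F] [Fintype F]
    (G : Type) [CommGroup G] [Fintype G] (g : G)
    (hgen : ∀ x : G, x ∈ Subgroup.zpowers g) (hcard : Fintype.card G = p ^ n)
    (hcop : Nat.Coprime (Fintype.card F) p)
    -- the order of `q = |F|` modulo `pⁿ` is `φ(pⁿ)`
    (hord : orderOf ((Fintype.card F : ZMod (p ^ n))) = Nat.totient (p ^ n))
    (i : ℕ) (hi1 : 1 ≤ i) (hin : i ≤ n) :
    Module.finrank F
      (LinearMap.range (LinearMap.mulRight F
        (hat F (Subgroup.zpowers (g ^ p ^ i)) - hat F (Subgroup.zpowers (g ^ p ^ (i - 1)))))) =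
      p ^ i - p ^ (i - 1) :=
  stmt18_general p n F G g hgen hcard hcop i hin
end
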